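/- Under Assumption 1, there exists a constant γ₀ > 0, depending only on K₁ and K₂, such that inf_{σ ≥ 0, ξ ∈ ℝ} sup_{γ ≥ 0} L(σ,ξ,γ) = inf_{σ ≥ 0, ξ ∈ ℝ} sup_{γ ≥ γ₀} L(σ,ξ,γ). -/

import Mathlib

open MeasureTheory ProbabilityTheory Real Set
open scoped BigOperators ENNReal NNReal

noncomputable section
/-- The logistic link `ρ(t) = log(1 + eᵗ)`. -/
def rho (t : ℝ) : ℝ := Real.log (1 + Real.exp t)

/-- Its derivative `ρ'(t) = eᵗ/(1 + eᵗ)`. -/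
def rho' (t : ℝ) : ℝ := Real.exp t / (1 + Real.exp t)

/-- The standard Gaussian measure on `ℝ`. -/
def stdGauss : Measure ℝ := gaussianReal 0 1

/-- `q(z) = E_G[ρ'((α_c/√α₂)·R·z + √(1 − α_c²/α₂)·R·G)]`, the conditional probability that
`Y = 1` given `Z₁ = z`. -/
def qfun (αc α₂ R z : ℝ) : ℝ :=
  ∫ g, rho' ((αc / Real.sqrt α₂) * R * z + Real.sqrt (1 - αc ^ 2 / α₂) * R * g) ∂stdGauss

/-- Expectation of `F(Z₁, Z₂, Y)` under the joint law of `(Z₁, Z₂, Y)`: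
`Z₁, Z₂` i.i.d. standard Gaussian, `Y ∈ {±1}` with `P(Y = 1 | Z₁) = q(Z₁)`. -/
def Eexp (αc α₂ R : ℝ) (F : ℝ → ℝ → ℝ → ℝ) : ℝ :=
  ∫ z₁, (∫ z₂, (qfun αc α₂ R z₁ * F z₁ z₂ 1
      + (1 - qfun αc α₂ R z₁) * F z₁ z₂ (-1)) ∂stdGauss) ∂stdGauss

/-- `V(Z₁, Z₂) = ξR√α₂·Z₁ + σ√α₂·Z₂`. -/
def Vfun (α₂ R σ ξ z₁ z₂ : ℝ) : ℝ := ξ * R * Real.sqrt α₂ * z₁ + σ * Real.sqrt α₂ * z₂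

/-- The asymptotic loss `L(σ, ξ, γ)`. -/
def Lasym (lam δ αc α₂ R σ ξ γ : ℝ) : ℝ :=
  lam * (σ ^ 2 + ξ ^ 2 * R ^ 2) / 2 - α₂ * γ * σ ^ 2 / (2 * δ) +
    Eexp αc α₂ R fun z₁ z₂ y =>
      ⨅ u : ℝ, (rho (-(y * u)) + γ / 2 * (u - Vfun α₂ R σ ξ z₁ z₂) ^ 2)

/-- Assumption 1 (parameter regularity), for the scalar parameters. -/
def Assump1 (K₁ K₂ δ R αc α₂ : ℝ) : Prop :=
  0 < K₁ ∧ K₁ ≤ K₂ ∧ δ ∈ Icc K₁ K₂ ∧ R ∈ Icc K₁ K₂ ∧ αc ∈ Icc K₁ K₂ ∧ α₂ ∈ Icc K₁ K₂ ∧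
    αc ≤ Real.sqrt α₂

/-- `(σs, ξs, γs)` is a saddle point of the asymptotic loss. -/
def Saddle (lam δ αc α₂ R σs ξs γs : ℝ) : Prop :=
  ∀ σ ξ γ : ℝ, 0 ≤ σ → 0 ≤ γ →
    Lasym lam δ αc α₂ R σ ξ γs ≤ Lasym lam δ αc α₂ R σs ξs γs ∧
      Lasym lam δ αc α₂ R σs ξs γs ≤ Lasym lam δ αc α₂ R σs ξs γ





lemma one_add_exp_pos (t : ℝ) : 0 < 1 + Real.exp t := by positivity

lemma rho_nonneg (t : ℝ) : 0 ≤ rho t :=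
  Real.log_nonneg (by linarith [Real.exp_pos t])

lemma rho_le_exp (t : ℝ) : rho t ≤ Real.exp t := by
  have h := Real.log_le_sub_one_of_pos (one_add_exp_pos t)
  simpa [rho] using h

lemma rho_le_log2_add_abs (t : ℝ) : rho t ≤ Real.log 2 + |t| := by
  have h1 : (1:ℝ) + Real.exp t ≤ 2 * Real.exp |t| := by
    have := Real.exp_le_exp.mpr (le_abs_self t)
    have := Real.one_le_exp (abs_nonneg t)
    linarith
  calc rho t ≤ Real.log (2 * Real.exp |t|) :=
        Real.log_le_log (one_add_exp_pos t) h1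
    _ = Real.log 2 + |t| := by
        rw [Real.log_mul (by norm_num) (Real.exp_pos _).ne', Real.log_exp]

lemma exp_lt_of_rho_lt {t B : ℝ} (h : rho t < B) : Real.exp t < Real.exp B - 1 := by
  have : (1:ℝ) + Real.exp t < Real.exp B := by
    have := Real.exp_lt_exp.mpr h
    rwa [rho, Real.exp_log (one_add_exp_pos t)] at this
  linarith

/-- `e^x ≤ 1 + 2x` on `[0,1]`. -/
lemma exp_le_one_add_two_mul {x : ℝ} (h0 : 0 ≤ x) (h1 : x ≤ 1) :
    Real.exp x ≤ 1 + 2 * x := by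
  have hc := convexOn_exp.2 (Set.mem_univ (0:ℝ)) (Set.mem_univ (1:ℝ))
    (show (0:ℝ) ≤ 1 - x by linarith) h0 (by ring)
  simp only [smul_eq_mul, mul_one, mul_zero, add_zero, Real.exp_zero] at hc
  have he : Real.exp 1 < 2.7182818286 := Real.exp_one_lt_d9
  calc Real.exp x = Real.exp ((1-x) * 0 + x * 1) := by ring_nf
    _ ≤ (1-x) * 1 + x * Real.exp 1 := by simpa using hc
    _ ≤ 1 + 2 * x := by nlinarith

/-- monotonic-type bound for rho: for `b ≤ a`, `rho a - rho b ≤ a - b`, and `rho b ≤ rho a`. -/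
lemma rho_mono {a b : ℝ} (h : b ≤ a) : rho b ≤ rho a := by
  have := Real.exp_le_exp.mpr h
  exact Real.log_le_log (one_add_exp_pos b) (by linarith)

lemma rho_lipschitz {a b : ℝ} (h : b ≤ a) : rho a - rho b ≤ a - b := by
  have key : (1:ℝ) + Real.exp a ≤ Real.exp (a - b) * (1 + Real.exp b) := by
    have h1 : (1:ℝ) ≤ Real.exp (a - b) := Real.one_le_exp (by linarith)
    have h2 : Real.exp (a - b) * Real.exp b = Real.exp a := by
      rw [← Real.exp_add]; ring_nf
    nlinarith
  have := Real.log_le_log (one_add_exp_pos a) key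
  rw [Real.log_mul (by positivity) (one_add_exp_pos b).ne', Real.log_exp] at this
  simp only [rho]; linarith

lemma rho'_nonneg (t : ℝ) : 0 ≤ rho' t := by
  unfold rho'; positivity

lemma rho'_le_one (t : ℝ) : rho' t ≤ 1 := by
  rw [rho', div_le_one (one_add_exp_pos t)]; linarith

lemma rho'_lower {x A : ℝ} (hA : 0 ≤ A) (hx : -A ≤ x) :
    Real.exp (-A) / 2 ≤ rho' x := by
  rw [rho', div_le_div_iff₀ (by norm_num) (one_add_exp_pos x)]
  have h1 : Real.exp (-A) ≤ Real.exp x := Real.exp_le_exp.mpr hx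
  have h2 : Real.exp (-A) * Real.exp x ≤ 1 * Real.exp x := by
    have : Real.exp (-A) ≤ 1 := Real.exp_le_one_iff.mpr (by linarith)
    nlinarith [Real.exp_pos x]
  nlinarith

lemma rho'_upper {x A : ℝ} (hA : 0 ≤ A) (hx : x ≤ A) :
    rho' x ≤ 1 - Real.exp (-A) / 2 := by
  have h := rho'_lower hA (neg_le_neg hx)
  have hrw : rho' (-x) = 1 - rho' x := by
    rw [rho', rho', Real.exp_neg]
    have h1 := Real.exp_pos x
    field_simp
    ring
  linarith [hrw ▸ h]

lemma rho_continuous : Continuous rho :=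
  (continuous_const.add Real.continuous_exp).log fun x => (one_add_exp_pos x).ne'

lemma rho'_continuous : Continuous rho' :=
  Real.continuous_exp.div (continuous_const.add Real.continuous_exp) fun x => (one_add_exp_pos x).ne'

def env (γ y v : ℝ) : ℝ := ⨅ u : ℝ, (rho (-(y * u)) + γ / 2 * (u - v) ^ 2)

lemma env_iInf (γ y v : ℝ) : env γ y v = ⨅ u : ℝ, (rho (-(y * u)) + γ / 2 * (u - v) ^ 2) := rfl

lemma env_bddBelow (γ y v : ℝ) (hγ : 0 ≤ γ) :
    BddBelow (Set.range fun u : ℝ => rho (-(y * u)) + γ / 2 * (u - v) ^ 2) := by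
  refine ⟨0, ?_⟩
  rintro x ⟨u, rfl⟩
  have := rho_nonneg (-(y*u))
  have : 0 ≤ γ / 2 * (u - v)^2 := by positivity
  dsimp
  linarith [rho_nonneg (-(y*u))]

lemma env_nonneg (γ y v : ℝ) (hγ : 0 ≤ γ) : 0 ≤ env γ y v := by
  refine le_ciInf fun u => ?_
  have : 0 ≤ γ / 2 * (u - v)^2 := by positivity
  linarith [rho_nonneg (-(y*u))]

lemma env_le (γ y v : ℝ) (hγ : 0 ≤ γ) (u : ℝ) :
    env γ y v ≤ rho (-(y * u)) + γ / 2 * (u - v) ^ 2 :=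
  ciInf_le (env_bddBelow γ y v hγ) u

lemma env_le_log2_add_abs {y : ℝ} (hy : y = 1 ∨ y = -1) (γ v : ℝ) (hγ : 0 ≤ γ) :
    env γ y v ≤ Real.log 2 + |v| := by
  have h := env_le γ y v hγ v
  have h2 : rho (-(y*v)) ≤ Real.log 2 + |v| := by
    have := rho_le_log2_add_abs (-(y*v))
    have habs : |(-(y*v))| = |v| := by rcases hy with rfl | rfl <;> simp [abs_mul]
    linarith [habs ▸ this]
  simpa using h.trans (by linarith)

lemma env_mono {γ γ' : ℝ} (y v : ℝ) (hγ : 0 ≤ γ) (h : γ ≤ γ') :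
    env γ y v ≤ env γ' y v := by
  refine le_ciInf fun u => ?_
  refine (env_le γ y v hγ u).trans ?_
  nlinarith [sq_nonneg (u - v)]

lemma env_upper {y : ℝ} (hy : y = 1 ∨ y = -1) {γ M : ℝ} (v : ℝ) (hγ : 0 ≤ γ) (hM : 0 ≤ M) :
    env γ y v ≤ Real.exp (-M) + γ * (M ^ 2 + v ^ 2) := by
  have hy2 : y * y = 1 := by rcases hy with rfl | rfl <;> norm_num
  have h := env_le γ y v hγ (v + y * (M - y * v))
  have h1 : -(y * (v + y * (M - y * v))) = -M := by
    have : y * (v + y * (M - y*v)) = y*v + (y*y) * (M - y*v) := by ring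
    rw [this, hy2]; ring
  rw [h1] at h
  have h2 : (v + y * (M - y * v) - v)^2 = (y*y) * (M - y*v)^2 := by ring
  rw [hy2] at h2
  have h3 : rho (-M) ≤ Real.exp (-M) := rho_le_exp _
  have h4 : (M - y*v)^2 ≤ 2 * (M^2 + v^2) := by
    have : (y*v)^2 = (y*y) * v^2 := by ring
    nlinarith [sq_nonneg (M + y*v), hy2 ▸ this]
  nlinarith

lemma env_eq_ratInf {y : ℝ} (γ v : ℝ) (hγ : 0 ≤ γ) :
    env γ y v = ⨅ r : ℚ, (rho (-(y * (r:ℝ))) + γ / 2 * ((r:ℝ) - v) ^ 2) := by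
  have hcont : Continuous fun u : ℝ => rho (-(y * u)) + γ / 2 * (u - v) ^ 2 := by
    apply Continuous.add
    · exact rho_continuous.comp (by continuity)
    · continuity
  have hbddQ : BddBelow (Set.range fun r : ℚ => rho (-(y * (r:ℝ))) + γ / 2 * ((r:ℝ) - v) ^ 2) := by
    refine ⟨0, ?_⟩
    rintro x ⟨r, rfl⟩
    have : 0 ≤ γ / 2 * ((r:ℝ) - v)^2 := by positivity
    dsimp; linarith [rho_nonneg (-(y*(r:ℝ)))]
  refine le_antisymm (le_ciInf fun r => ciInf_le (env_bddBelow γ y v hγ) (r:ℝ))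
    (le_ciInf fun u => ?_)
  refine le_of_forall_pos_le_add fun ε hε => ?_
  set g := fun u : ℝ => rho (-(y * u)) + γ / 2 * (u - v) ^ 2 with hg
  obtain ⟨δ, hδ, hcl⟩ := Metric.continuous_iff.mp hcont u ε hε
  obtain ⟨r, hr⟩ := exists_rat_near u hδ
  have hdist : dist (r:ℝ) u < δ := by rwa [Real.dist_eq, abs_sub_comm]
  have := hcl (r:ℝ) hdist
  rw [Real.dist_eq] at this
  have h2 : g (r:ℝ) ≤ g u + ε := by
    have := abs_lt.mp this
    linarith [this.2]
  exact (ciInf_le hbddQ r).trans h2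

lemma env_measurable {y : ℝ} (γ : ℝ) (hγ : 0 ≤ γ) :
    Measurable fun v => env γ y v := by
  have : (fun v => env γ y v)
      = fun v => ⨅ r : ℚ, (rho (-(y * (r:ℝ))) + γ / 2 * ((r:ℝ) - v) ^ 2) := by
    funext v; exact env_eq_ratInf γ v hγ
  rw [this]
  exact Measurable.iInf fun r => by
    apply Measurable.add measurable_const
    exact (measurable_const.mul ((measurable_const.sub measurable_id).pow measurable_const))
lemma sqrt_exp_neg (t : ℝ) : Real.sqrt (Real.exp (-t)) = Real.exp (-t / 2) := by
  have h : Real.exp (-t) = (Real.exp (-t/2))^2 := by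
    rw [sq, ← Real.exp_add]
    norm_num
  rw [h, Real.sqrt_sq (Real.exp_pos _).le]

lemma env_gap {γ t v y : ℝ} (hy : y = 1 ∨ y = -1) (hyv : y * v ≤ 0)
    (hγ : 0 ≤ γ) (hγγ : γ ≤ Real.exp (-t)) (ht : 4 * Real.log 2 ≤ t)
    (henv : env (Real.exp (-t)) y v < Real.exp (-t / 2)) :
    env γ y v + (Real.exp (-t) - γ) * (t ^ 2 / 32) ≤ env (Real.exp (-t)) y v := by
  set γ₀ := Real.exp (-t) with hγ₀
  have hγ₀pos : 0 < γ₀ := Real.exp_pos _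
  have hlog2 : (0:ℝ) < Real.log 2 := Real.log_pos (by norm_num)
  have htpos : 0 < t := by linarith
  have hs : Real.exp (-t/2) ≤ 1 := Real.exp_le_one_iff.mpr (by linarith)
  refine le_of_forall_pos_le_add fun ε0 hε0 => ?_
  set ε := min ε0 (Real.exp (-t/2) - env γ₀ y v) with hε
  have hεpos : 0 < ε := lt_min hε0 (by linarith)
  have hεle : env γ₀ y v + ε ≤ Real.exp (-t/2) := by
    have := min_le_right ε0 (Real.exp (-t/2) - env γ₀ y v)
    simp only [hε]; linarith
  -- get a near-minimizer
  have hlt : (⨅ u : ℝ, (rho (-(y * u)) + γ₀ / 2 * (u - v) ^ 2)) < env γ₀ y v + ε := by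
    rw [← env_iInf]; linarith
  obtain ⟨u, hu⟩ := exists_lt_of_ciInf_lt hlt
  -- hu : rho (-(y*u)) + γ₀/2 * (u-v)^2 < env γ₀ y v + ε
  have hq0 : 0 ≤ γ₀/2 * (u - v)^2 := by positivity
  have hrho : rho (-(y*u)) < Real.exp (-t/2) := by
    have := rho_nonneg (-(y*u)); linarith
  have hexp : Real.exp (-(y*u)) < Real.exp (Real.exp (-t/2)) - 1 :=
    exp_lt_of_rho_lt hrho
  have hexp2 : Real.exp (Real.exp (-t/2)) ≤ 1 + 2 * Real.exp (-t/2) :=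
    exp_le_one_add_two_mul (Real.exp_pos _).le hs
  have hexp3 : Real.exp (-(y*u)) < 2 * Real.exp (-t/2) := by linarith
  have hexp4 : (2:ℝ) * Real.exp (-t/2) = Real.exp (Real.log 2 + -t/2) := by
    rw [Real.exp_add, Real.exp_log]; norm_num
  have hyu : -(y*u) < Real.log 2 + -t/2 := by
    have := hexp4 ▸ hexp3
    exact Real.exp_lt_exp.mp this
  -- y*(u - v) ≥ y*u ≥ t/2 - log 2 ≥ t/4
  have hyuv : t/4 ≤ y * (u - v) := by
    have h1 : t/2 - Real.log 2 ≤ y*u := by linarith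
    have h2 : Real.log 2 ≤ t/4 := by linarith
    have : y*(u-v) = y*u - y*v := by ring
    rw [this]; linarith
  have hy2 : y * y = 1 := by rcases hy with rfl | rfl <;> norm_num
  have hsq : t^2/16 ≤ (u - v)^2 := by
    have h1 : (t/4)^2 ≤ (y*(u-v))^2 := by
      have ht4 : (0:ℝ) ≤ t/4 := by linarith
      nlinarith
    have h2 : (y*(u-v))^2 = (u-v)^2 := by
      have : (y*(u-v))^2 = (y*y)*(u-v)^2 := by ring
      rw [this, hy2, one_mul]
    nlinarith [h2 ▸ h1]
  have hmain : env γ y v ≤ env γ₀ y v + ε - (γ₀ - γ) * (t^2/32) := by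
    have h1 := env_le γ y v hγ u
    have h2 : rho (-(y*u)) + γ/2*(u-v)^2
        = (rho (-(y*u)) + γ₀/2*(u-v)^2) - (γ₀ - γ)/2 * (u-v)^2 := by ring
    have h3 : (γ₀ - γ)/2 * (t^2/16) ≤ (γ₀ - γ)/2 * (u-v)^2 := by
      apply mul_le_mul_of_nonneg_left hsq; linarith
    have h4 : (γ₀ - γ)/2 * (t^2/16) = (γ₀ - γ) * (t^2/32) := by ring
    linarith
  have : ε ≤ ε0 := min_le_left _ _
  linarith

instance : IsProbabilityMeasure stdGauss := by
  unfold stdGauss; infer_instance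

lemma stdGauss_eq : stdGauss = volume.withDensity (gaussianPDF 0 1) :=
  gaussianReal_of_var_ne_zero 0 one_ne_zero

lemma integrable_abs_stdGauss : Integrable (fun x : ℝ => |x|) stdGauss := by
  rw [stdGauss_eq, integrable_withDensity_iff (measurable_gaussianPDF 0 1)
    (Filter.Eventually.of_forall fun x => ENNReal.ofReal_lt_top)]
  have hform : (fun x : ℝ => |x| * ((gaussianPDF 0 1 x).toReal))
      = fun x : ℝ => (√(2 * π))⁻¹ * |x * Real.exp (-(1/2 : ℝ) * x ^ 2)| := by
    funext x
    rw [gaussianPDF, ENNReal.toReal_ofReal (gaussianPDFReal_nonneg 0 1 x), gaussianPDFReal]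
    rw [abs_mul, abs_of_pos (Real.exp_pos _)]
    push_cast
    ring_nf
  rw [hform]
  exact ((integrable_mul_exp_neg_mul_sq (by norm_num : (0:ℝ) < 1/2)).abs).const_mul _

lemma stdGauss_Icc_toReal : (stdGauss (Icc (-1:ℝ) 1)).toReal
    = ∫ x in Icc (-1:ℝ) 1, gaussianPDFReal 0 1 x := by
  rw [stdGauss, gaussianReal_apply_eq_integral 0 one_ne_zero,
    ENNReal.toReal_ofReal (setIntegral_nonneg measurableSet_Icc
      fun x _ => gaussianPDFReal_nonneg 0 1 x)]

lemma stdGauss_Icc_lower : (1:ℝ)/3 ≤ (stdGauss (Icc (-1:ℝ) 1)).toReal := by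
  rw [stdGauss_Icc_toReal]
  have hc : ∀ x ∈ Icc (-1:ℝ) 1, (√(2 * π))⁻¹ * Real.exp (-(1:ℝ)/2) ≤ gaussianPDFReal 0 1 x := by
    intro x hx
    rcases hx with ⟨h1, h2⟩
    rw [gaussianPDFReal]
    norm_num
    apply mul_le_mul_of_nonneg_left _ (by positivity)
    rw [Real.exp_le_exp]
    nlinarith
  have hlow : ∫ x in Icc (-1:ℝ) 1, ((√(2 * π))⁻¹ * Real.exp (-(1:ℝ)/2))
      ≤ ∫ x in Icc (-1:ℝ) 1, gaussianPDFReal 0 1 x := by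
    apply setIntegral_mono_on
    · exact integrableOn_const measure_Icc_lt_top.ne
    · exact (integrable_gaussianPDFReal 0 1).integrableOn
    · exact measurableSet_Icc
    · exact hc
  have hval : ∫ _x in Icc (-1:ℝ) 1, ((√(2 * π))⁻¹ * Real.exp (-(1:ℝ)/2))
      = 2 * ((√(2 * π))⁻¹ * Real.exp (-(1:ℝ)/2)) := by
    rw [setIntegral_const, Real.volume_real_Icc]
    norm_num
  rw [hval] at hlow
  refine le_trans ?_ hlow
  -- numeric: 2 * (√(2π))⁻¹ * exp(-1/2) ≥ 1/3
  have hpi : π < 3.15 := Real.pi_lt_d2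
  have hpi0 : 0 < π := Real.pi_pos
  have hsqrt : √(2 * π) ≤ 2.6 := by
    have h1 : (2:ℝ) * π ≤ 2.6^2 := by nlinarith
    calc √(2 * π) ≤ √(2.6^2) := Real.sqrt_le_sqrt h1
      _ = 2.6 := Real.sqrt_sq (by norm_num)
  have hsqrt0 : 0 < √(2 * π) := Real.sqrt_pos.mpr (by positivity)
  have hexp : (1:ℝ)/1.65 ≤ Real.exp (-(1:ℝ)/2) := by
    have h1 : Real.exp ((1:ℝ)/2) ≤ 1.65 := by
      have h2 : Real.exp ((1:ℝ)/2) * Real.exp ((1:ℝ)/2) = Real.exp 1 := by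
        rw [← Real.exp_add]; norm_num
      have h3 : Real.exp 1 < 2.7182818286 := Real.exp_one_lt_d9
      nlinarith [Real.exp_pos ((1:ℝ)/2)]
    have h4 : Real.exp (-(1:ℝ)/2) = (Real.exp ((1:ℝ)/2))⁻¹ := by
      rw [← Real.exp_neg]; norm_num
    rw [h4]
    rw [div_le_iff₀ (by norm_num)]
    rw [inv_mul_eq_div, le_div_iff₀ (Real.exp_pos _)]
    linarith
  have : (1:ℝ)/3 ≤ 2 * ((2.6:ℝ)⁻¹ * (1/1.65)) := by norm_num
  refine this.trans ?_
  gcongr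

variable {K₁ K₂ αc α₂ R : ℝ}

lemma qfun_integrable (z : ℝ) :
    Integrable (fun g => rho' ((αc / Real.sqrt α₂) * R * z
      + Real.sqrt (1 - αc ^ 2 / α₂) * R * g)) stdGauss := by
  refine (integrable_const (1:ℝ)).mono' ?_ ?_
  · exact (rho'_continuous.comp (by continuity)).aestronglyMeasurable
  · refine Filter.Eventually.of_forall fun g => ?_
    rw [Real.norm_eq_abs, abs_of_nonneg (rho'_nonneg _)]
    exact rho'_le_one _

lemma qfun_mem01 (z : ℝ) : qfun αc α₂ R z ∈ Icc (0:ℝ) 1 := by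
  constructor
  · exact integral_nonneg fun g => rho'_nonneg _
  · calc qfun αc α₂ R z ≤ ∫ _g, (1:ℝ) ∂stdGauss :=
        integral_mono (qfun_integrable z) (integrable_const 1) fun g => rho'_le_one _
      _ = 1 := by simp

lemma qfun_measurable : Measurable (qfun αc α₂ R) := by
  have hc : Continuous (Function.uncurry fun z g => rho' ((αc / Real.sqrt α₂) * R * z
      + Real.sqrt (1 - αc ^ 2 / α₂) * R * g)) := by
    apply rho'_continuous.comp
    exact (continuous_const.mul continuous_fst).add (continuous_const.mul continuous_snd)
  exact hc.stronglyMeasurable.integral_prod_right.measurable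

section bounds
variable (hK₁ : 0 < K₁) (hK : K₁ ≤ K₂) (hαc : αc ∈ Icc K₁ K₂) (hα₂ : α₂ ∈ Icc K₁ K₂)
  (hR : R ∈ Icc K₁ K₂) (hcs : αc ≤ Real.sqrt α₂)
include hK₁ hK hαc hα₂ hR hcs

lemma arg_bound {z g : ℝ} (hz : |z| ≤ 1) (hg : |g| ≤ 1) :
    |(αc / Real.sqrt α₂) * R * z + Real.sqrt (1 - αc ^ 2 / α₂) * R * g| ≤ 2 * K₂ := by
  have hα₂pos : 0 < α₂ := lt_of_lt_of_le hK₁ hα₂.1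
  have hsq : 0 < Real.sqrt α₂ := Real.sqrt_pos.mpr hα₂pos
  have ha1 : αc / Real.sqrt α₂ ≤ 1 := (div_le_one hsq).mpr hcs
  have ha0 : 0 ≤ αc / Real.sqrt α₂ := by
    apply div_nonneg (le_of_lt (lt_of_lt_of_le hK₁ hαc.1)) hsq.le
  have hb1 : Real.sqrt (1 - αc ^ 2 / α₂) ≤ 1 := by
    have h0 : 0 ≤ αc ^2 / α₂ := by positivity
    calc √(1 - αc ^ 2 / α₂) ≤ √1 := Real.sqrt_le_sqrt (by linarith)
      _ = 1 := Real.sqrt_one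
  have hb0 : 0 ≤ Real.sqrt (1 - αc ^ 2 / α₂) := Real.sqrt_nonneg _
  have hR0 : 0 ≤ R := le_of_lt (lt_of_lt_of_le hK₁ hR.1)
  have hRK : R ≤ K₂ := hR.2
  calc |(αc / Real.sqrt α₂) * R * z + Real.sqrt (1 - αc ^ 2 / α₂) * R * g|
      ≤ |(αc / Real.sqrt α₂) * R * z| + |Real.sqrt (1 - αc ^ 2 / α₂) * R * g| := abs_add_le _ _
    _ ≤ K₂ * 1 + K₂ * 1 := by
        rw [abs_mul, abs_mul, abs_mul, abs_mul]
        rw [abs_of_nonneg ha0, abs_of_nonneg hb0, abs_of_nonneg hR0]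
        apply add_le_add
        · apply mul_le_mul _ hz (abs_nonneg z) (by linarith)
          nlinarith
        · apply mul_le_mul _ hg (abs_nonneg g) (by linarith)
          nlinarith
    _ = 2 * K₂ := by ring

lemma qfun_lower {z : ℝ} (hz : |z| ≤ 1) :
    Real.exp (-(2 * K₂)) / 6 ≤ qfun αc α₂ R z := by
  have hK₂ : 0 ≤ 2 * K₂ := by linarith
  set c := Real.exp (-(2 * K₂)) / 2 with hc
  have hc0 : 0 ≤ c := by positivity
  have hmono : ∫ g, (Icc (-1:ℝ) 1).indicator (fun _ => c) g ∂stdGauss ≤ qfun αc α₂ R z := by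
    apply integral_mono ((integrable_const c).indicator measurableSet_Icc) (qfun_integrable z)
    intro g
    by_cases hg : g ∈ Icc (-1:ℝ) 1
    · rw [indicator_of_mem hg]
      have habs := arg_bound hK₁ hK hαc hα₂ hR hcs hz (abs_le.mpr ⟨hg.1, hg.2⟩)
      exact rho'_lower hK₂ (neg_le_of_abs_le habs)
    · rw [indicator_of_notMem hg]
      exact rho'_nonneg _
  rw [integral_indicator_const c measurableSet_Icc, smul_eq_mul] at hmono
  have h3 := stdGauss_Icc_lower
  calc Real.exp (-(2 * K₂)) / 6 = (1/3) * c := by rw [hc]; ring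
    _ ≤ (stdGauss (Icc (-1:ℝ) 1)).toReal * c := by
        apply mul_le_mul_of_nonneg_right _ hc0; linarith
    _ ≤ qfun αc α₂ R z := hmono

lemma qfun_upper {z : ℝ} (hz : |z| ≤ 1) :
    qfun αc α₂ R z ≤ 1 - Real.exp (-(2 * K₂)) / 6 := by
  have hK₂ : 0 ≤ 2 * K₂ := by linarith
  set c := Real.exp (-(2 * K₂)) / 2 with hc
  have hc0 : 0 ≤ c := by positivity
  have hmono : qfun αc α₂ R z
      ≤ ∫ g, (1 - (Icc (-1:ℝ) 1).indicator (fun _ => c) g) ∂stdGauss := by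
    apply integral_mono (qfun_integrable z)
      ((integrable_const 1).sub ((integrable_const c).indicator measurableSet_Icc))
    intro g
    simp only [Pi.sub_apply]
    by_cases hg : g ∈ Icc (-1:ℝ) 1
    · rw [indicator_of_mem hg]
      have habs := arg_bound hK₁ hK hαc hα₂ hR hcs hz (abs_le.mpr ⟨hg.1, hg.2⟩)
      have := rho'_upper hK₂ (le_of_abs_le habs)
      simpa using this
    · rw [indicator_of_notMem hg]
      simpa using rho'_le_one _
  rw [integral_sub (integrable_const 1)
    ((integrable_const c).indicator measurableSet_Icc)] at hmono
  rw [integral_indicator_const c measurableSet_Icc, smul_eq_mul] at hmono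
  simp only [integral_const, measure_univ, probReal_univ, smul_eq_mul, one_mul] at hmono
  have h3 := stdGauss_Icc_lower
  have : (1/3) * c ≤ (stdGauss (Icc (-1:ℝ) 1)).toReal * c :=
    mul_le_mul_of_nonneg_right (by linarith) hc0
  calc qfun αc α₂ R z ≤ 1 - (stdGauss (Icc (-1:ℝ) 1)).toReal * c := hmono
    _ ≤ 1 - (1/3) * c := by linarith
    _ = 1 - Real.exp (-(2 * K₂)) / 6 := by rw [hc]; ring

end bounds


/-! ### The iterated-integral form of the loss -/

def Ffun (αc α₂ R σ ξ γ z₁ z₂ : ℝ) : ℝ :=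
  qfun αc α₂ R z₁ * env γ 1 (Vfun α₂ R σ ξ z₁ z₂)
    + (1 - qfun αc α₂ R z₁) * env γ (-1) (Vfun α₂ R σ ξ z₁ z₂)

def Ifun (αc α₂ R σ ξ γ z₁ : ℝ) : ℝ := ∫ z₂, Ffun αc α₂ R σ ξ γ z₁ z₂ ∂stdGauss

def Efun (αc α₂ R σ ξ γ : ℝ) : ℝ := ∫ z₁, Ifun αc α₂ R σ ξ γ z₁ ∂stdGauss

lemma Lasym_eq (lam δ αc α₂ R σ ξ γ : ℝ) :
    Lasym lam δ αc α₂ R σ ξ γ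
      = lam * (σ ^ 2 + ξ ^ 2 * R ^ 2) / 2 - α₂ * γ * σ ^ 2 / (2 * δ)
        + Efun αc α₂ R σ ξ γ := rfl

section Emach

variable {αc α₂ R σ ξ γ γ' : ℝ}

lemma Vfun_abs_le (α₂ R σ ξ z₁ z₂ : ℝ) :
    |Vfun α₂ R σ ξ z₁ z₂| ≤ |ξ * R * Real.sqrt α₂| * |z₁| + |σ * Real.sqrt α₂| * |z₂| := by
  calc |Vfun α₂ R σ ξ z₁ z₂| ≤ |ξ * R * Real.sqrt α₂ * z₁| + |σ * Real.sqrt α₂ * z₂| :=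
        abs_add_le _ _
    _ = |ξ * R * Real.sqrt α₂| * |z₁| + |σ * Real.sqrt α₂| * |z₂| := by
        rw [abs_mul (ξ * R * Real.sqrt α₂) z₁, abs_mul (σ * Real.sqrt α₂) z₂]

lemma Ffun_nonneg (hγ : 0 ≤ γ) (z₁ z₂ : ℝ) : 0 ≤ Ffun αc α₂ R σ ξ γ z₁ z₂ := by
  have hq := qfun_mem01 (αc := αc) (α₂ := α₂) (R := R) z₁
  have h1 := env_nonneg γ 1 (Vfun α₂ R σ ξ z₁ z₂) hγ
  have h2 := env_nonneg γ (-1) (Vfun α₂ R σ ξ z₁ z₂) hγ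
  have := hq.1; have := hq.2
  unfold Ffun
  nlinarith

lemma Ffun_le (hγ : 0 ≤ γ) (z₁ z₂ : ℝ) :
    Ffun αc α₂ R σ ξ γ z₁ z₂ ≤ Real.log 2 + |Vfun α₂ R σ ξ z₁ z₂| := by
  have hq := qfun_mem01 (αc := αc) (α₂ := α₂) (R := R) z₁
  have h1 := env_le_log2_add_abs (Or.inl rfl) γ (Vfun α₂ R σ ξ z₁ z₂) hγ
  have h2 := env_le_log2_add_abs (Or.inr rfl) γ (Vfun α₂ R σ ξ z₁ z₂) hγ
  have hq1 := hq.1; have hq2 := hq.2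
  unfold Ffun
  nlinarith

lemma Ffun_mono (hγ : 0 ≤ γ) (hγγ : γ ≤ γ') (z₁ z₂ : ℝ) :
    Ffun αc α₂ R σ ξ γ z₁ z₂ ≤ Ffun αc α₂ R σ ξ γ' z₁ z₂ := by
  have hq := qfun_mem01 (αc := αc) (α₂ := α₂) (R := R) z₁
  have h1 := env_mono 1 (Vfun α₂ R σ ξ z₁ z₂) hγ hγγ
  have h2 := env_mono (-1) (Vfun α₂ R σ ξ z₁ z₂) hγ hγγ
  have hq1 := hq.1; have hq2 := hq.2
  unfold Ffun
  nlinarith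

lemma Vfun_measurable (α₂ R σ ξ : ℝ) :
    Measurable fun p : ℝ × ℝ => Vfun α₂ R σ ξ p.1 p.2 := by
  unfold Vfun
  exact ((measurable_const.mul measurable_fst).add (measurable_const.mul measurable_snd))

lemma Ffun_measurable (hγ : 0 ≤ γ) :
    Measurable fun p : ℝ × ℝ => Ffun αc α₂ R σ ξ γ p.1 p.2 := by
  unfold Ffun
  have hq : Measurable fun p : ℝ × ℝ => qfun αc α₂ R p.1 :=
    qfun_measurable.comp measurable_fst
  have h1 : Measurable fun p : ℝ × ℝ => env γ 1 (Vfun α₂ R σ ξ p.1 p.2) :=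
    (env_measurable γ hγ).comp (Vfun_measurable α₂ R σ ξ)
  have h2 : Measurable fun p : ℝ × ℝ => env γ (-1) (Vfun α₂ R σ ξ p.1 p.2) :=
    (env_measurable γ hγ).comp (Vfun_measurable α₂ R σ ξ)
  exact (hq.mul h1).add ((measurable_const.sub hq).mul h2)

lemma bound_integrable (a b : ℝ) :
    Integrable (fun z : ℝ => a + b * |z|) stdGauss :=
  (integrable_const a).add (integrable_abs_stdGauss.const_mul b)

lemma Ffun_integrable_right (hγ : 0 ≤ γ) (z₁ : ℝ) :
    Integrable (fun z₂ => Ffun αc α₂ R σ ξ γ z₁ z₂) stdGauss := by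
  refine (bound_integrable (Real.log 2 + |ξ * R * Real.sqrt α₂| * |z₁|)
    |σ * Real.sqrt α₂|).mono' ?_ ?_
  · have h := Ffun_measurable (αc := αc) (α₂ := α₂) (R := R) (σ := σ) (ξ := ξ) (γ := γ) hγ
    exact (h.comp measurable_prodMk_left).aestronglyMeasurable
  · refine Filter.Eventually.of_forall fun z₂ => ?_
    rw [Real.norm_eq_abs, abs_of_nonneg (Ffun_nonneg hγ z₁ z₂)]
    have h1 := Ffun_le (σ := σ) (ξ := ξ) (αc := αc) (α₂ := α₂) (R := R) hγ z₁ z₂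
    have h2 := Vfun_abs_le α₂ R σ ξ z₁ z₂
    linarith

lemma Ifun_nonneg (hγ : 0 ≤ γ) (z₁ : ℝ) : 0 ≤ Ifun αc α₂ R σ ξ γ z₁ :=
  integral_nonneg fun z₂ => Ffun_nonneg hγ z₁ z₂

/-- abbreviation for the first absolute moment of the standard gaussian -/
def gaussAbsMoment : ℝ := ∫ x, |x| ∂stdGauss

lemma Ifun_le (hγ : 0 ≤ γ) (z₁ : ℝ) :
    Ifun αc α₂ R σ ξ γ z₁ ≤ (Real.log 2 + |ξ * R * Real.sqrt α₂| * |z₁|)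
      + |σ * Real.sqrt α₂| * gaussAbsMoment := by
  have hint := bound_integrable (Real.log 2 + |ξ * R * Real.sqrt α₂| * |z₁|) |σ * Real.sqrt α₂|
  have h1 : Ifun αc α₂ R σ ξ γ z₁
      ≤ ∫ z₂, ((Real.log 2 + |ξ * R * Real.sqrt α₂| * |z₁|)
          + |σ * Real.sqrt α₂| * |z₂|) ∂stdGauss := by
    apply integral_mono (Ffun_integrable_right hγ z₁) hint
    intro z₂
    have h1 := Ffun_le (σ := σ) (ξ := ξ) (αc := αc) (α₂ := α₂) (R := R) hγ z₁ z₂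
    have h2 := Vfun_abs_le α₂ R σ ξ z₁ z₂
    dsimp only
    linarith
  rw [integral_add (integrable_const _) (integrable_abs_stdGauss.const_mul _)] at h1
  rw [integral_const, integral_const_mul] at h1
  simpa [gaussAbsMoment] using h1

lemma Ifun_stronglyMeasurable (hγ : 0 ≤ γ) :
    StronglyMeasurable fun z₁ => Ifun αc α₂ R σ ξ γ z₁ := by
  have h : StronglyMeasurable (Function.uncurry fun z₁ z₂ => Ffun αc α₂ R σ ξ γ z₁ z₂) :=
    (Ffun_measurable hγ).stronglyMeasurable
  exact h.integral_prod_right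

lemma Ifun_integrable (hγ : 0 ≤ γ) :
    Integrable (fun z₁ => Ifun αc α₂ R σ ξ γ z₁) stdGauss := by
  refine (bound_integrable (Real.log 2 + |σ * Real.sqrt α₂| * gaussAbsMoment)
    |ξ * R * Real.sqrt α₂|).mono' (Ifun_stronglyMeasurable hγ).aestronglyMeasurable ?_
  refine Filter.Eventually.of_forall fun z₁ => ?_
  rw [Real.norm_eq_abs, abs_of_nonneg (Ifun_nonneg hγ z₁)]
  have := Ifun_le (σ := σ) (ξ := ξ) (αc := αc) (α₂ := α₂) (R := R) hγ z₁
  linarith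

lemma Efun_nonneg (hγ : 0 ≤ γ) : 0 ≤ Efun αc α₂ R σ ξ γ :=
  integral_nonneg fun z₁ => Ifun_nonneg hγ z₁

lemma Efun_le (hγ : 0 ≤ γ) :
    Efun αc α₂ R σ ξ γ ≤ Real.log 2 + |ξ * R * Real.sqrt α₂| * gaussAbsMoment
      + |σ * Real.sqrt α₂| * gaussAbsMoment := by
  have h1 : Efun αc α₂ R σ ξ γ
      ≤ ∫ z₁, ((Real.log 2 + |σ * Real.sqrt α₂| * gaussAbsMoment)
          + |ξ * R * Real.sqrt α₂| * |z₁|) ∂stdGauss := by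
    apply integral_mono (Ifun_integrable hγ) (bound_integrable _ _)
    intro z₁
    have := Ifun_le (σ := σ) (ξ := ξ) (αc := αc) (α₂ := α₂) (R := R) hγ z₁
    dsimp only
    linarith
  rw [integral_add (integrable_const _) (integrable_abs_stdGauss.const_mul _)] at h1
  rw [integral_const, integral_const_mul] at h1
  simp only [measure_univ, probReal_univ, smul_eq_mul, one_mul] at h1
  unfold gaussAbsMoment at h1 ⊢
  linarith

lemma Efun_mono (hγ : 0 ≤ γ) (hγγ : γ ≤ γ') : Efun αc α₂ R σ ξ γ ≤ Efun αc α₂ R σ ξ γ' := by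
  have hγ' : 0 ≤ γ' := le_trans hγ hγγ
  apply integral_mono (Ifun_integrable hγ) (Ifun_integrable hγ')
  intro z₁
  apply integral_mono (Ffun_integrable_right hγ z₁) (Ffun_integrable_right hγ' z₁)
  intro z₂
  exact Ffun_mono hγ hγγ z₁ z₂

end Emach



/-! ### Key quantitative gap -/

lemma Efun_gap
    {K₁ K₂ αc α₂ R σ ξ : ℝ}
    (hK₁ : 0 < K₁) (hK : K₁ ≤ K₂) (hαc : αc ∈ Icc K₁ K₂) (hα₂ : α₂ ∈ Icc K₁ K₂)
    (hR : R ∈ Icc K₁ K₂) (hcs : αc ≤ Real.sqrt α₂)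
    {S2 t γ : ℝ}
    (hσ2 : σ ^ 2 ≤ S2) (hξ2 : ξ ^ 2 ≤ S2)
    (ht : 4 * Real.log 2 ≤ t)
    (htV : Real.exp (-t/2) * (1 + t^2 + (Real.sqrt S2 * Real.sqrt K₂ * (K₂+1))^2) < 1)
    (hγ : 0 ≤ γ) (hγγ : γ ≤ Real.exp (-t)) :
    Efun αc α₂ R σ ξ γ
      + (Real.exp (-t) - γ) * (Real.exp (-(2*K₂))/6) * (t^2/32)
          * ((stdGauss (Icc (-1:ℝ) 1)).toReal)^2
      ≤ Efun αc α₂ R σ ξ (Real.exp (-t)) := by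
  have hlog2 : (0:ℝ) < Real.log 2 := Real.log_pos (by norm_num)
  have ht0 : (0:ℝ) ≤ t := by linarith
  set γ₀ := Real.exp (-t) with hγ₀def
  have hγ₀ : 0 ≤ γ₀ := (Real.exp_pos _).le
  set η₀ := Real.exp (-(2*K₂))/6 with hη₀def
  have hη₀ : 0 < η₀ := by positivity
  set κ := (γ₀ - γ) * η₀ * (t^2/32) with hκdef
  have hκ : 0 ≤ κ := by
    apply mul_nonneg (mul_nonneg (by linarith) hη₀.le) (by positivity)
  set p := (stdGauss (Icc (-1:ℝ) 1)).toReal with hpdef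
  have hp : 0 ≤ p := ENNReal.toReal_nonneg
  set Vb := Real.sqrt S2 * Real.sqrt K₂ * (K₂+1) with hVbdef
  -- Step A : pointwise inequality on the box
  have stepA : ∀ z₁ ∈ Icc (-1:ℝ) 1, ∀ z₂ ∈ Icc (-1:ℝ) 1,
      Ffun αc α₂ R σ ξ γ z₁ z₂ + κ ≤ Ffun αc α₂ R σ ξ γ₀ z₁ z₂ := by
    intro z₁ hz₁ z₂ hz₂
    have hz₁' : |z₁| ≤ 1 := abs_le.mpr ⟨hz₁.1, hz₁.2⟩
    have hz₂' : |z₂| ≤ 1 := abs_le.mpr ⟨hz₂.1, hz₂.2⟩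
    set v := Vfun α₂ R σ ξ z₁ z₂ with hvdef
    have hR0 : 0 ≤ R := le_of_lt (lt_of_lt_of_le hK₁ hR.1)
    have hα₂0 : 0 ≤ Real.sqrt α₂ := Real.sqrt_nonneg _
    have hsqα₂ : Real.sqrt α₂ ≤ Real.sqrt K₂ := Real.sqrt_le_sqrt hα₂.2
    have hξabs : |ξ| ≤ Real.sqrt S2 := by
      have := Real.sqrt_le_sqrt hξ2
      rwa [Real.sqrt_sq_eq_abs] at this
    have hσabs : |σ| ≤ Real.sqrt S2 := by
      have := Real.sqrt_le_sqrt hσ2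
      rwa [Real.sqrt_sq_eq_abs] at this
    have hS2' : (0:ℝ) ≤ Real.sqrt S2 := Real.sqrt_nonneg _
    have hK₂' : (0:ℝ) ≤ Real.sqrt K₂ := Real.sqrt_nonneg _
    have hvb : |v| ≤ Vb := by
      have h1 := Vfun_abs_le α₂ R σ ξ z₁ z₂
      have hK₂0 : (0:ℝ) ≤ K₂ := by linarith
      have h2 : |ξ * R * Real.sqrt α₂| ≤ Real.sqrt S2 * K₂ * Real.sqrt K₂ := by
        rw [abs_mul, abs_mul, abs_of_nonneg hR0, abs_of_nonneg hα₂0]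
        apply mul_le_mul _ hsqα₂ hα₂0 (mul_nonneg hS2' hK₂0)
        exact mul_le_mul hξabs hR.2 hR0 hS2'
      have h3 : |σ * Real.sqrt α₂| ≤ Real.sqrt S2 * Real.sqrt K₂ := by
        rw [abs_mul, abs_of_nonneg hα₂0]
        exact mul_le_mul hσabs hsqα₂ hα₂0 hS2'
      have h4 : |ξ * R * Real.sqrt α₂| * |z₁| ≤ Real.sqrt S2 * K₂ * Real.sqrt K₂ := by
        have := mul_le_mul_of_nonneg_left hz₁' (abs_nonneg (ξ * R * Real.sqrt α₂))
        rw [mul_one] at this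
        linarith
      have h5 : |σ * Real.sqrt α₂| * |z₂| ≤ Real.sqrt S2 * Real.sqrt K₂ := by
        have := mul_le_mul_of_nonneg_left hz₂' (abs_nonneg (σ * Real.sqrt α₂))
        rw [mul_one] at this
        linarith
      have h6 : Vb = Real.sqrt S2 * K₂ * Real.sqrt K₂ + Real.sqrt S2 * Real.sqrt K₂ := by
        rw [hVbdef]; ring
      linarith
    have hv2 : v^2 ≤ Vb^2 := by
      have : v^2 = |v|^2 := (sq_abs v).symm
      rw [this]
      have hVb0 : 0 ≤ Vb := le_trans (abs_nonneg v) hvb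
      nlinarith [abs_nonneg v]
    -- the key per-sign estimate
    have hexp_split : γ₀ = Real.exp (-t/2) * Real.exp (-t/2) := by
      rw [hγ₀def, ← Real.exp_add]; ring_nf
    have henv_small : ∀ y : ℝ, y = 1 ∨ y = -1 → env γ₀ y v < Real.exp (-t/2) := by
      intro y hy
      have h1 : env γ₀ y v ≤ Real.exp (-t) + γ₀ * (t^2 + v^2) :=
        env_upper hy v hγ₀ ht0
      have h2 : Real.exp (-t) + γ₀ * (t^2 + v^2) = γ₀ * (1 + t^2 + v^2) := by
        rw [hγ₀def]; ring
      have h3 : γ₀ * (1 + t^2 + v^2) ≤ γ₀ * (1 + t^2 + Vb^2) := by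
        apply mul_le_mul_of_nonneg_left _ hγ₀
        linarith
      have h4 : γ₀ * (1 + t^2 + Vb^2)
          = Real.exp (-t/2) * (Real.exp (-t/2) * (1 + t^2 + Vb^2)) := by
        rw [hexp_split]; ring
      have h5 : Real.exp (-t/2) * (Real.exp (-t/2) * (1 + t^2 + Vb^2))
          < Real.exp (-t/2) * 1 :=
        mul_lt_mul_of_pos_left htV (Real.exp_pos _)
      rw [mul_one] at h5
      linarith
    have hgap : ∀ y : ℝ, y = 1 ∨ y = -1 → y * v ≤ 0 →
        env γ y v + (γ₀ - γ) * (t^2/32) ≤ env γ₀ y v := fun y hy hyv =>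
      env_gap hy hyv hγ hγγ ht (henv_small y hy)
    -- weights
    have hql := qfun_lower hK₁ hK hαc hα₂ hR hcs hz₁'
    have hqu := qfun_upper hK₁ hK hαc hα₂ hR hcs hz₁'
    have hq01 := qfun_mem01 (αc := αc) (α₂ := α₂) (R := R) z₁
    have hmono1 : env γ 1 v ≤ env γ₀ 1 v := env_mono 1 v hγ hγγ
    have hmono2 : env γ (-1) v ≤ env γ₀ (-1) v := env_mono (-1) v hγ hγγ
    have hγ₀γ : 0 ≤ γ₀ - γ := by linarith
    have ht32 : 0 ≤ t^2/32 := by positivity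
    have hX : 0 ≤ (γ₀ - γ) * (t^2/32) := mul_nonneg hγ₀γ ht32
    have hκeq : κ = η₀ * ((γ₀ - γ) * (t^2/32)) := by rw [hκdef]; ring
    have hη₀q : η₀ ≤ qfun αc α₂ R z₁ := by rw [hη₀def]; exact hql
    have hη₀q' : η₀ ≤ 1 - qfun αc α₂ R z₁ := by rw [hη₀def]; linarith
    have hq0 : 0 ≤ qfun αc α₂ R z₁ := hq01.1
    have h1q0 : 0 ≤ 1 - qfun αc α₂ R z₁ := by linarith [hq01.2]
    rcases le_or_gt 0 v with hv | hv
    · -- use y = -1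
      have hkey := hgap (-1) (Or.inr rfl) (by linarith)
      have hq1le : qfun αc α₂ R z₁ * env γ 1 v ≤ qfun αc α₂ R z₁ * env γ₀ 1 v :=
        mul_le_mul_of_nonneg_left hmono1 hq0
      have f1 : (1 - qfun αc α₂ R z₁) * ((γ₀ - γ) * (t^2/32))
          ≤ (1 - qfun αc α₂ R z₁) * (env γ₀ (-1) v - env γ (-1) v) :=
        mul_le_mul_of_nonneg_left (by linarith) h1q0
      have f1' : (1 - qfun αc α₂ R z₁) * (env γ₀ (-1) v - env γ (-1) v)
          = (1 - qfun αc α₂ R z₁) * env γ₀ (-1) v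
            - (1 - qfun αc α₂ R z₁) * env γ (-1) v := by ring
      have f2 : η₀ * ((γ₀ - γ) * (t^2/32))
          ≤ (1 - qfun αc α₂ R z₁) * ((γ₀ - γ) * (t^2/32)) :=
        mul_le_mul_of_nonneg_right hη₀q' hX
      unfold Ffun
      rw [← hvdef]
      linarith
    · -- use y = 1
      have hkey := hgap 1 (Or.inl rfl) (by linarith)
      have hq2le : (1 - qfun αc α₂ R z₁) * env γ (-1) v
          ≤ (1 - qfun αc α₂ R z₁) * env γ₀ (-1) v :=
        mul_le_mul_of_nonneg_left hmono2 h1q0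
      have f1 : qfun αc α₂ R z₁ * ((γ₀ - γ) * (t^2/32))
          ≤ qfun αc α₂ R z₁ * (env γ₀ 1 v - env γ 1 v) :=
        mul_le_mul_of_nonneg_left (by linarith) hq0
      have f1' : qfun αc α₂ R z₁ * (env γ₀ 1 v - env γ 1 v)
          = qfun αc α₂ R z₁ * env γ₀ 1 v - qfun αc α₂ R z₁ * env γ 1 v := by ring
      have f2 : η₀ * ((γ₀ - γ) * (t^2/32))
          ≤ qfun αc α₂ R z₁ * ((γ₀ - γ) * (t^2/32)) :=
        mul_le_mul_of_nonneg_right hη₀q hX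
      unfold Ffun
      rw [← hvdef]
      linarith
  -- Step B : inner integration
  have hγ₀' : (0:ℝ) ≤ γ₀ := hγ₀
  have stepB : ∀ z₁ : ℝ, Ifun αc α₂ R σ ξ γ z₁
      + (Icc (-1:ℝ) 1).indicator (fun _ => κ * p) z₁ ≤ Ifun αc α₂ R σ ξ γ₀ z₁ := by
    intro z₁
    by_cases hz₁ : z₁ ∈ Icc (-1:ℝ) 1
    · rw [indicator_of_mem hz₁]
      have hIccInt : Integrable ((Icc (-1:ℝ) 1).indicator (fun _ => κ)) stdGauss :=
        (integrable_const κ).indicator measurableSet_Icc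
      have key : ∫ z₂, (Ffun αc α₂ R σ ξ γ z₁ z₂
            + (Icc (-1:ℝ) 1).indicator (fun _ => κ) z₂) ∂stdGauss
          ≤ ∫ z₂, Ffun αc α₂ R σ ξ γ₀ z₁ z₂ ∂stdGauss := by
        apply integral_mono ((Ffun_integrable_right hγ z₁).add hIccInt)
          (Ffun_integrable_right hγ₀' z₁)
        intro z₂
        show Ffun αc α₂ R σ ξ γ z₁ z₂ + (Icc (-1:ℝ) 1).indicator (fun _ => κ) z₂
          ≤ Ffun αc α₂ R σ ξ γ₀ z₁ z₂
        by_cases hz₂ : z₂ ∈ Icc (-1:ℝ) 1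
        · rw [indicator_of_mem hz₂]
          exact stepA z₁ hz₁ z₂ hz₂
        · rw [indicator_of_notMem hz₂, add_zero]
          exact Ffun_mono hγ hγγ z₁ z₂
      rw [integral_add (Ffun_integrable_right hγ z₁) hIccInt,
        integral_indicator_const _ measurableSet_Icc, smul_eq_mul] at key
      have : stdGauss.real (Icc (-1:ℝ) 1) * κ = κ * p := by rw [measureReal_def, hpdef]; ring
      rw [this] at key
      exact key
    · rw [indicator_of_notMem hz₁, add_zero]
      apply integral_mono (Ffun_integrable_right hγ z₁) (Ffun_integrable_right hγ₀' z₁)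
      intro z₂
      exact Ffun_mono hγ hγγ z₁ z₂
  -- Step C : outer integration
  have hIccInt1 : Integrable ((Icc (-1:ℝ) 1).indicator (fun _ => κ * p)) stdGauss :=
    (integrable_const (κ * p)).indicator measurableSet_Icc
  have keyC : ∫ z₁, (Ifun αc α₂ R σ ξ γ z₁
        + (Icc (-1:ℝ) 1).indicator (fun _ => κ * p) z₁) ∂stdGauss
      ≤ ∫ z₁, Ifun αc α₂ R σ ξ γ₀ z₁ ∂stdGauss := by
    apply integral_mono ((Ifun_integrable hγ).add hIccInt1) (Ifun_integrable hγ₀')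
    intro z₁
    exact stepB z₁
  rw [integral_add (Ifun_integrable hγ) hIccInt1,
    integral_indicator_const _ measurableSet_Icc, smul_eq_mul] at keyC
  have hfinal : stdGauss.real (Icc (-1:ℝ) 1) * (κ * p)
      = (γ₀ - γ) * η₀ * (t^2/32) * p^2 := by
    rw [measureReal_def, hκdef, hpdef]; ring
  rw [hfinal] at keyC
  have hgoal : (Real.exp (-t) - γ) * (Real.exp (-(2*K₂))/6) * (t^2/32)
      * ((stdGauss (Icc (-1:ℝ) 1)).toReal)^2 = (γ₀ - γ) * η₀ * (t^2/32) * p^2 := by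
    rw [hγ₀def, hη₀def, hpdef]
  unfold Efun
  rw [hgoal]
  exact keyC
set_option maxHeartbeats 1600000 in
/-- Under Assumption 1, there is a `γ₀ > 0`, depending only on `K₁, K₂`, such
that `inf_{σ ≥ 0, ξ} sup_{γ ≥ 0} L(σ, ξ, γ) = inf_{σ ≥ 0, ξ} sup_{γ ≥ γ₀} L(σ, ξ, γ)`. -/
theorem statement1 (K₁ K₂ : ℝ) (hK₁ : 0 < K₁) (hK : K₁ ≤ K₂) :
    ∃ γ₀ : ℝ, 0 < γ₀ ∧
      ∀ lam δ R αc α₂ : ℝ, Assump1 K₁ K₂ δ R αc α₂ → lam ∈ Icc K₁ K₂ →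
        (⨅ σ : Ici (0 : ℝ), ⨅ ξ : ℝ, ⨆ γ : Ici (0 : ℝ), Lasym lam δ αc α₂ R σ ξ γ)
          = (⨅ σ : Ici (0 : ℝ), ⨅ ξ : ℝ, ⨆ γ : Ici γ₀, Lasym lam δ αc α₂ R σ ξ γ) := by
  have hlog2 : (0:ℝ) < Real.log 2 := Real.log_pos (by norm_num)
  have hK₂0 : (0:ℝ) < K₂ := lt_of_lt_of_le hK₁ hK
  set S2 : ℝ := 4 * Real.log 2 * (1/K₁ + 1/K₁^3) with hS2def
  have hK₁inv : (0:ℝ) < 1/K₁ := by positivity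
  have hK₁inv3 : (0:ℝ) < 1/K₁^3 := by positivity
  have hS2 : 0 < S2 := by rw [hS2def]; positivity
  set η₀ : ℝ := Real.exp (-(2*K₂))/6 with hη₀def
  have hη₀ : 0 < η₀ := by rw [hη₀def]; positivity
  set c₁ : ℝ := K₂ * S2 / (2*K₁) with hc₁def
  have hc₁ : 0 < c₁ := by rw [hc₁def]; positivity
  set Vb : ℝ := Real.sqrt S2 * Real.sqrt K₂ * (K₂+1) with hVbdef
  -- choose `t` large enough
  have htend : Filter.Tendsto (fun u : ℝ => Real.exp (-u/2) * (1 + u^2 + Vb^2))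
      Filter.atTop (nhds 0) := by
    have h1 : Filter.Tendsto (fun u : ℝ => u / 2) Filter.atTop Filter.atTop :=
      Filter.tendsto_id.atTop_div_const (by norm_num)
    have h2 : Filter.Tendsto (fun x : ℝ => x ^ 2 * Real.exp (-x)) Filter.atTop (nhds 0) :=
      tendsto_pow_mul_exp_neg_atTop_nhds_zero 2
    have h0 : Filter.Tendsto (fun x : ℝ => x ^ 0 * Real.exp (-x)) Filter.atTop (nhds 0) :=
      tendsto_pow_mul_exp_neg_atTop_nhds_zero 0
    have h2' := h2.comp h1
    have h0' := h0.comp h1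
    have heq : (fun u : ℝ => Real.exp (-u/2) * (1 + u^2 + Vb^2))
        = fun u : ℝ => (1 + Vb^2) * ((u/2) ^ 0 * Real.exp (-(u/2)))
            + 4 * ((u/2) ^ 2 * Real.exp (-(u/2))) := by
      funext u
      have : -u/2 = -(u/2) := by ring
      rw [this]
      ring
    rw [heq]
    have := (h0'.const_mul (1 + Vb^2)).add (h2'.const_mul 4)
    simpa using this
  have hev : ∀ᶠ u in Filter.atTop,
      Real.exp (-u/2) * (1 + u^2 + Vb^2) < 1 := by
    have h01 : (0:ℝ) < 1 := one_pos
    exact htend.eventually (Filter.tendsto_id.eventually_lt_const h01 |>.mono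
      fun x hx => hx) |>.mono fun x hx => hx
  obtain ⟨t₀, ht₀⟩ := Filter.eventually_atTop.mp hev
  set t : ℝ := max (max t₀ (4 * Real.log 2)) (max (Real.sqrt (288 * c₁ / η₀))
    (Real.log (2*K₂/K₁^2))) with htdef
  have htt₀ : t₀ ≤ t := le_trans (le_max_left _ _) (le_max_left _ _)
  have ht4 : 4 * Real.log 2 ≤ t := le_trans (le_max_right _ _) (le_max_left _ _)
  have ht0 : 0 ≤ t := le_trans (by positivity) ht4
  have htV : Real.exp (-t/2) * (1 + t^2 + Vb^2) < 1 := ht₀ t htt₀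
  have htreq : c₁ ≤ η₀ * t^2 / 288 := by
    have h1 : Real.sqrt (288 * c₁ / η₀) ≤ t := le_trans (le_max_left _ _) (le_max_right _ _)
    have h2 : (0:ℝ) ≤ 288 * c₁ / η₀ := by positivity
    have h3 : 288 * c₁ / η₀ ≤ t^2 := by
      have := Real.sq_sqrt h2
      nlinarith [Real.sqrt_nonneg (288 * c₁ / η₀)]
    rw [le_div_iff₀ (by norm_num : (0:ℝ) < 288)]
    calc c₁ * 288 = (288 * c₁ / η₀) * η₀ := by
          rw [div_mul_cancel₀ _ hη₀.ne']; ring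
      _ ≤ t^2 * η₀ := mul_le_mul_of_nonneg_right h3 hη₀.le
      _ = η₀ * t^2 := by ring
  have htK : Real.exp (-t) ≤ K₁^2/(2*K₂) := by
    have h1 : Real.log (2*K₂/K₁^2) ≤ t := le_trans (le_max_right _ _) (le_max_right _ _)
    have h2 : (0:ℝ) < 2*K₂/K₁^2 := by positivity
    calc Real.exp (-t) ≤ Real.exp (-Real.log (2*K₂/K₁^2)) := by
          rw [Real.exp_le_exp]; linarith
      _ = (2*K₂/K₁^2)⁻¹ := by rw [Real.exp_neg, Real.exp_log h2]
      _ = K₁^2/(2*K₂) := by rw [inv_div]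
  refine ⟨Real.exp (-t), Real.exp_pos _, ?_⟩
  intro lam δ R αc α₂ hA hlam
  obtain ⟨-, -, hδ, hR, hαc, hα₂, hcs⟩ := hA
  set γ₀ : ℝ := Real.exp (-t) with hγ₀def
  have hγ₀pos : 0 < γ₀ := Real.exp_pos _
  have hδ0 : 0 < δ := lt_of_lt_of_le hK₁ hδ.1
  have hlam0 : 0 < lam := lt_of_lt_of_le hK₁ hlam.1
  have hα₂0 : 0 < α₂ := lt_of_lt_of_le hK₁ hα₂.1
  have hR0 : 0 < R := lt_of_lt_of_le hK₁ hR.1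
  have hcoef : K₁/4 ≤ lam/2 - α₂*γ₀/(2*δ) := by
    have h1 : α₂*γ₀/(2*δ) ≤ K₂*γ₀/(2*K₁) := by
      apply div_le_div₀ (by positivity) (mul_le_mul_of_nonneg_right hα₂.2 hγ₀pos.le)
        (by linarith) (by linarith [hδ.1])
    have h2 : K₂*γ₀/(2*K₁) ≤ K₂*(K₁^2/(2*K₂))/(2*K₁) := by
      apply div_le_div₀ (by positivity) (mul_le_mul_of_nonneg_left htK hK₂0.le)
        (by linarith) (le_refl _)
    have h3 : K₂*(K₁^2/(2*K₂))/(2*K₁) = K₁/4 := by field_simp; ring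
    have h4 : K₁ ≤ lam := hlam.1
    linarith [h3 ▸ h2]
  have hcoef0 : 0 ≤ lam/2 - α₂*γ₀/(2*δ) := le_trans (by linarith) hcoef
  -- notation
  set m : ℝ := gaussAbsMoment with hmdef
  haveI : Nonempty ↥(Ici γ₀) := ⟨⟨γ₀, Set.self_mem_Ici⟩⟩
  haveI : Nonempty ↥(Ici (0:ℝ)) := ⟨⟨0, Set.self_mem_Ici⟩⟩
  set L : ℝ → ℝ → ℝ → ℝ := fun σ ξ γ => Lasym lam δ αc α₂ R σ ξ γ with hLdef
  set A : ℝ → ℝ → ℝ := fun σ ξ => ⨆ γ : Ici (0:ℝ), L σ ξ ↑γ with hAdef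
  set B : ℝ → ℝ → ℝ := fun σ ξ => ⨆ γ : Ici γ₀, L σ ξ ↑γ with hBdef
  -- basic bounds on L
  have hLrw : ∀ σ ξ γ : ℝ, L σ ξ γ = lam * (σ^2 + ξ^2*R^2)/2 - α₂*γ*σ^2/(2*δ)
      + Efun αc α₂ R σ ξ γ := fun σ ξ γ => Lasym_eq lam δ αc α₂ R σ ξ γ
  have hub : ∀ σ ξ γ : ℝ, 0 ≤ γ → L σ ξ γ ≤ lam * (σ^2 + ξ^2*R^2)/2
      + (Real.log 2 + |ξ*R*Real.sqrt α₂| * m + |σ*Real.sqrt α₂| * m) := by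
    intro σ ξ γ hγ
    rw [hLrw]
    have h1 : 0 ≤ α₂*γ*σ^2/(2*δ) := by positivity
    have h2 := Efun_le (αc := αc) (α₂ := α₂) (R := R) (σ := σ) (ξ := ξ) hγ
    rw [hmdef]
    linarith
  have hlb : ∀ σ ξ γ : ℝ, 0 ≤ γ →
      lam * (σ^2 + ξ^2*R^2)/2 - α₂*γ*σ^2/(2*δ) ≤ L σ ξ γ := by
    intro σ ξ γ hγ
    rw [hLrw]
    have := Efun_nonneg (αc := αc) (α₂ := α₂) (R := R) (σ := σ) (ξ := ξ) hγ
    linarith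
  have hbddA : ∀ σ ξ : ℝ, BddAbove (Set.range fun γ : Ici (0:ℝ) => L σ ξ ↑γ) := by
    intro σ ξ
    refine ⟨lam * (σ^2 + ξ^2*R^2)/2
      + (Real.log 2 + |ξ*R*Real.sqrt α₂| * m + |σ*Real.sqrt α₂| * m), ?_⟩
    rintro x ⟨γ, rfl⟩
    exact hub σ ξ ↑γ γ.2
  have hbddB : ∀ σ ξ : ℝ, BddAbove (Set.range fun γ : Ici γ₀ => L σ ξ ↑γ) := by
    intro σ ξ
    refine ⟨lam * (σ^2 + ξ^2*R^2)/2
      + (Real.log 2 + |ξ*R*Real.sqrt α₂| * m + |σ*Real.sqrt α₂| * m), ?_⟩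
    rintro x ⟨γ, rfl⟩
    exact hub σ ξ ↑γ (le_trans hγ₀pos.le γ.2)
  have hBleA : ∀ σ ξ : ℝ, B σ ξ ≤ A σ ξ := by
    intro σ ξ
    exact ciSup_le fun γ => le_ciSup (hbddA σ ξ) ⟨↑γ, le_trans hγ₀pos.le γ.2⟩
  have hBlbL : ∀ σ ξ : ℝ, L σ ξ γ₀ ≤ B σ ξ := fun σ ξ =>
    le_ciSup (hbddB σ ξ) ⟨γ₀, Set.self_mem_Ici⟩
  have hBlb : ∀ σ ξ : ℝ, σ^2 * (lam/2 - α₂*γ₀/(2*δ)) + lam * ξ^2*R^2/2 ≤ B σ ξ := by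
    intro σ ξ
    have h1 := hlb σ ξ γ₀ hγ₀pos.le
    have h2 : lam * (σ^2 + ξ^2*R^2)/2 - α₂*γ₀*σ^2/(2*δ)
        = σ^2 * (lam/2 - α₂*γ₀/(2*δ)) + lam * ξ^2*R^2/2 := by ring
    linarith [hBlbL σ ξ]
  have hB0 : ∀ σ ξ : ℝ, 0 ≤ B σ ξ := by
    intro σ ξ
    have e1 : 0 ≤ σ^2 * (lam/2 - α₂*γ₀/(2*δ)) := mul_nonneg (sq_nonneg σ) hcoef0
    have e2 : 0 ≤ lam * ξ^2*R^2/2 := by positivity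
    linarith only [hBlb σ ξ, e1, e2]
  -- the value at the origin
  have hA00 : A 0 0 ≤ Real.log 2 := by
    apply ciSup_le
    rintro ⟨γ, hγ⟩
    have := hub 0 0 γ hγ
    simpa using this
  have hAlow : ∀ σ ξ : ℝ, 0 ≤ A σ ξ := by
    intro σ ξ
    refine le_trans ?_ (le_ciSup (hbddA σ ξ) ⟨0, Set.self_mem_Ici⟩)
    have h1 := hlb σ ξ 0 (le_refl 0)
    have h2 : lam * (σ^2 + ξ^2*R^2)/2 - α₂*0*σ^2/(2*δ) = lam * (σ^2 + ξ^2*R^2)/2 := by ring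
    have e1 : 0 ≤ lam * (σ^2 + ξ^2*R^2)/2 := by positivity
    linarith only [h1, h2, e1]
  -- case 2 : large parameters
  have hcase2 : ∀ σ ξ : ℝ, (S2 < σ^2 ∨ S2 < ξ^2) → Real.log 2 ≤ B σ ξ := by
    intro σ ξ hbig
    have hblb := hBlb σ ξ
    rcases hbig with hσ | hξ
    · have e1 : S2 * (K₁/4) ≤ σ^2 * (lam/2 - α₂*γ₀/(2*δ)) :=
        mul_le_mul hσ.le hcoef (by linarith) (sq_nonneg σ)
      have e2 : Real.log 2 ≤ S2 * (K₁/4) := by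
        have heq : S2 * (K₁/4) = Real.log 2 * (1 + 1/K₁^2) := by
          rw [hS2def]; field_simp
        have h5 : 0 ≤ Real.log 2 * (1/K₁^2) := by positivity
        have h6 : Real.log 2 * (1 + 1/K₁^2) = Real.log 2 + Real.log 2 * (1/K₁^2) := by ring
        linarith only [heq, h5, h6]
      have e3 : 0 ≤ lam * ξ^2*R^2/2 := by positivity
      linarith only [hblb, e1, e2, e3]
    · have p1 : K₁ * S2 ≤ lam * ξ^2 := mul_le_mul hlam.1 hξ.le hS2.le hlam0.le
      have p2 : K₁^2 ≤ R^2 := pow_le_pow_left₀ hK₁.le hR.1 2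
      have p3 : (K₁ * S2) * K₁^2 ≤ (lam * ξ^2) * R^2 :=
        mul_le_mul p1 p2 (by positivity) (mul_nonneg hlam0.le (sq_nonneg ξ))
      have e1 : K₁^3 * S2 / 2 ≤ lam * ξ^2 * R^2 / 2 := by
        have h7 : (K₁ * S2) * K₁^2 = K₁^3 * S2 := by ring
        have h8 : (lam * ξ^2) * R^2 = lam * ξ^2 * R^2 := by ring
        linarith only [p3, h7, h8]
      have e2 : Real.log 2 ≤ K₁^3 * S2 / 2 := by
        have heq : K₁^3 * S2 / 2 = 2 * Real.log 2 * (K₁^2 + 1) := by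
          rw [hS2def]; field_simp; ring
        have h5 : 0 ≤ Real.log 2 * K₁^2 := by positivity
        have h6 : 2 * Real.log 2 * (K₁^2 + 1) = 2 * (Real.log 2 * K₁^2) + 2 * Real.log 2 := by
          ring
        linarith only [heq, h5, h6, hlog2]
      have e3 : 0 ≤ σ^2 * (lam/2 - α₂*γ₀/(2*δ)) := mul_nonneg (sq_nonneg σ) hcoef0
      linarith only [hblb, e1, e2, e3]
  -- case 1 : small parameters, the sups agree
  have hcase1 : ∀ σ ξ : ℝ, σ^2 ≤ S2 → ξ^2 ≤ S2 → A σ ξ ≤ B σ ξ := by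
    intro σ ξ hσ2 hξ2
    apply ciSup_le
    rintro ⟨γ, hγ : (0:ℝ) ≤ γ⟩
    by_cases hγγ₀ : γ₀ ≤ γ
    · exact le_ciSup (hbddB σ ξ) ⟨γ, hγγ₀⟩
    · push_neg at hγγ₀
      refine le_trans ?_ (hBlbL σ ξ)
      show L σ ξ γ ≤ L σ ξ γ₀
      rw [hLrw, hLrw]
      have hgap := Efun_gap hK₁ hK hαc hα₂ hR hcs hσ2 hξ2 ht4 htV hγ
        (by rw [← hγ₀def]; exact hγγ₀.le)
      rw [← hγ₀def, ← hη₀def] at hgap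
      set Eg : ℝ := Efun αc α₂ R σ ξ γ with hEgdef
      set Eg0 : ℝ := Efun αc α₂ R σ ξ γ₀ with hEg0def
      clear_value Eg Eg0
      set p : ℝ := (stdGauss (Icc (-1:ℝ) 1)).toReal with hpdef
      have hp : (1:ℝ)/3 ≤ p := stdGauss_Icc_lower
      have hp2 : (1:ℝ)/9 ≤ p^2 := by nlinarith only [hp]
      have q1 : α₂*σ^2/(2*δ) ≤ c₁ := by
        rw [hc₁def]
        apply div_le_div₀ (by positivity)
          (mul_le_mul hα₂.2 hσ2 (sq_nonneg σ) hK₂0.le) (by linarith) (by linarith [hδ.1])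
      have q3 : η₀*t^2/288 ≤ η₀*(t^2/32)*p^2 := by
        have h1 : η₀*(t^2/32)*(1/9) ≤ η₀*(t^2/32)*p^2 :=
          mul_le_mul_of_nonneg_left hp2 (by positivity)
        have h2 : η₀*(t^2/32)*(1/9) = η₀*t^2/288 := by ring
        linarith only [h1, h2]
      have hq : α₂*σ^2/(2*δ) ≤ η₀*(t^2/32)*p^2 := by linarith only [q1, htreq, q3]
      have hD : (0:ℝ) ≤ γ₀ - γ := by linarith only [hγγ₀]
      have hfin : (γ₀-γ)*(α₂*σ^2/(2*δ)) ≤ (γ₀-γ)*(η₀*(t^2/32)*p^2) :=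
        mul_le_mul_of_nonneg_left hq hD
      have e1 : (γ₀-γ)*η₀*(t^2/32)*p^2 = (γ₀-γ)*(η₀*(t^2/32)*p^2) := by ring
      have e2 : α₂*γ₀*σ^2/(2*δ) - α₂*γ*σ^2/(2*δ) = (γ₀-γ)*(α₂*σ^2/(2*δ)) := by ring
      linarith only [hgap, hfin, e1, e2]
  have hABeq : ∀ σ ξ : ℝ, σ^2 ≤ S2 → ξ^2 ≤ S2 → A σ ξ = B σ ξ := fun σ ξ h1 h2 =>
    le_antisymm (hcase1 σ ξ h1 h2) (hBleA σ ξ)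
  -- bounded below structures
  have hInnerA : ∀ σ : Ici (0:ℝ), BddBelow (Set.range fun ξ : ℝ => A ↑σ ξ) := by
    intro σ
    exact ⟨0, by rintro x ⟨ξ, rfl⟩; exact hAlow ↑σ ξ⟩
  have hInnerB : ∀ σ : Ici (0:ℝ), BddBelow (Set.range fun ξ : ℝ => B ↑σ ξ) := by
    intro σ
    exact ⟨0, by rintro x ⟨ξ, rfl⟩; exact hB0 ↑σ ξ⟩
  have hOuterA : BddBelow (Set.range fun σ : Ici (0:ℝ) => ⨅ ξ : ℝ, A ↑σ ξ) := by
    exact ⟨0, by rintro x ⟨σ, rfl⟩; exact le_ciInf fun ξ => hAlow ↑σ ξ⟩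
  have hOuterB : BddBelow (Set.range fun σ : Ici (0:ℝ) => ⨅ ξ : ℝ, B ↑σ ξ) := by
    exact ⟨0, by rintro x ⟨σ, rfl⟩; exact le_ciInf fun ξ => hB0 ↑σ ξ⟩
  have hchainA : ∀ (σ' : Ici (0:ℝ)) (ξ' : ℝ),
      (⨅ σ : Ici (0:ℝ), ⨅ ξ : ℝ, A ↑σ ξ) ≤ A ↑σ' ξ' := fun σ' ξ' =>
    le_trans (ciInf_le hOuterA σ') (ciInf_le (hInnerA σ') ξ')
  have hchainB : ∀ (σ' : Ici (0:ℝ)) (ξ' : ℝ),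
      (⨅ σ : Ici (0:ℝ), ⨅ ξ : ℝ, B ↑σ ξ) ≤ B ↑σ' ξ' := fun σ' ξ' =>
    le_trans (ciInf_le hOuterB σ') (ciInf_le (hInnerB σ') ξ')
  apply le_antisymm
  · refine le_ciInf fun σ => le_ciInf fun ξ => ?_
    show (⨅ σ : Ici (0:ℝ), ⨅ ξ : ℝ, A ↑σ ξ) ≤ B ↑σ ξ
    rcases le_or_gt ((σ:ℝ)^2) S2 with h1 | h1
    · rcases le_or_gt (ξ^2) S2 with h2 | h2
      · exact le_trans (hchainA σ ξ) (le_of_eq (hABeq ↑σ ξ h1 h2))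
      · refine le_trans (hchainA ⟨0, Set.self_mem_Ici⟩ 0) ?_
        exact le_trans hA00 (hcase2 ↑σ ξ (Or.inr h2))
    · refine le_trans (hchainA ⟨0, Set.self_mem_Ici⟩ 0) ?_
      exact le_trans hA00 (hcase2 ↑σ ξ (Or.inl h1))
  · refine le_ciInf fun σ => le_ciInf fun ξ => ?_
    show (⨅ σ : Ici (0:ℝ), ⨅ ξ : ℝ, B ↑σ ξ) ≤ A ↑σ ξ
    exact le_trans (hchainB σ ξ) (hBleA ↑σ ξ)

end
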